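/- Shuffle of words ending in distinguished letters with x0-tails: for positive integers a, c, (x1 x0^{a-1}) ⧢ (x1 x0^{c-1}) = ∑_{i=1}^{a} C(a-i+c-1, c-1) x1 x0^{i-1} x1 x0^{a+c-i-1} + ∑_{i=1}^{c} C(c-i+a-1, a-1) x1 x0^{i-1} x1 x0^{a+c-i-1}, where the first sum collects terms whose first x1 comes from the first word and the second sum those from the second word. -/

import Mathlib

/-- The shuffle product of words over `{x0, x1}` (encoded as `Bool`, `x1 = true`,
`x0 = false`), as a multiset of words. -/
def sh : List Bool → List Bool → Multiset (List Bool)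
  | [], v => {v}
  | a :: u, [] => {a :: u}
  | a :: u, b :: v =>
      (sh u (b :: v)).map (a :: ·) + (sh (a :: u) v).map (b :: ·)
termination_by u v => u.length + v.length

/-!
In `x1 x0^{a-1} ⧢ x1 x0^{c-1}` the first letter is the leading `x1` of one of the two words; the
rest is then `x0^{a-1} ⧢ x1 x0^{c-1}` (or the symmetric product). In `x0^m ⧢ x1 x0^n` the letter
`x1` is preceded by `j` letters `x0`, all from `x0^m`, and followed by `x0^{m-j} ⧢ x0^n`, which
is `x0^{m-j+n}` with multiplicity `C(m-j+n, n)`.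
-/

theorem Multiset.map_finset_sum {α β ι : Type*} (f : α → β) (s : Finset ι)
    (g : ι → Multiset α) : (∑ i ∈ s, g i).map f = ∑ i ∈ s, (g i).map f :=
  map_sum (Multiset.mapAddMonoidHom f) g s

lemma sh_nil_right (u : List Bool) : sh u [] = {u} := by
  cases u <;> simp [sh]

lemma sh_comm (u v : List Bool) : sh u v = sh v u := by
  induction u generalizing v with
  | nil => cases v <;> simp [sh]
  | cons a u ih =>
    induction v with
    | nil => simp [sh]
    | cons b v ihv => rw [sh, sh, ih, ihv, add_comm]

lemma sh_replicate_replicate (b : Bool) :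
    ∀ m n : ℕ, sh (List.replicate m b) (List.replicate n b) =
      (m + n).choose m • {List.replicate (m + n) b}
  | 0, n => by simp [sh]
  | m + 1, 0 => by simp [sh_nil_right]
  | m + 1, n + 1 => by
    have hm := sh_replicate_replicate b m (n + 1)
    have hn := sh_replicate_replicate b (m + 1) n
    simp only [List.replicate_succ] at hm hn ⊢
    rw [sh, hm, hn, Multiset.map_nsmul, Multiset.map_nsmul, Multiset.map_singleton,
      Multiset.map_singleton, ← List.replicate_succ, ← List.replicate_succ,
      show m + (n + 1) = m + 1 + n by omega, ← add_nsmul, show m + 1 + (n + 1) = m + 1 + n + 1 by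
      omega, Nat.choose_succ_succ' (m + 1 + n) m]
  termination_by m n => m + n

lemma sh_replicate_false_cons_true (m n : ℕ) :
    sh (List.replicate m false) (true :: List.replicate n false) =
      ∑ j ∈ Finset.range (m + 1), (m - j + n).choose n •
        {List.replicate j false ++ true :: List.replicate (m - j + n) false} := by
  induction m with
  | zero => simp [sh]
  | succ m ih =>
    rw [List.replicate_succ, sh, ih, ← List.replicate_succ, sh_comm, sh_replicate_replicate,
      Multiset.map_finset_sum, Multiset.map_nsmul, Multiset.map_singleton,
      Finset.sum_range_succ' _ (m + 1)]
    simp only [Multiset.map_nsmul, Multiset.map_singleton, Nat.succ_sub_succ,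
      List.replicate_zero, List.nil_append, Nat.sub_zero, List.replicate_succ, List.cons_append]
    rw [add_comm n (m + 1)]

lemma map_cons_true_sh_replicate_false (a c : ℕ) (ha : 1 ≤ a) (hc : 1 ≤ c) :
    (sh (List.replicate (a - 1) false) (true :: List.replicate (c - 1) false)).map (true :: ·) =
      ∑ i ∈ Finset.Icc 1 a, Nat.choose (a - i + c - 1) (c - 1) •
        {true :: (List.replicate (i - 1) false ++ true :: List.replicate (a + c - i - 1) false)} := by
  rw [sh_replicate_false_cons_true, Multiset.map_finset_sum, ← Finset.Ico_add_one_right_eq_Icc,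
    Finset.sum_Ico_eq_sum_range, show a + 1 - 1 = a - 1 + 1 by omega]
  refine Finset.sum_congr rfl fun j hj => ?_
  have hja : j ≤ a - 1 := Nat.lt_succ_iff.mp (Finset.mem_range.mp hj)
  rw [Multiset.map_nsmul, Multiset.map_singleton, show a - (1 + j) + c - 1 = a - 1 - j + (c - 1) by
    omega, show 1 + j - 1 = j by omega, show a + c - (1 + j) - 1 = a - 1 - j + (c - 1) by omega]

/-- `(x1 x0^{a-1}) ⧢ (x1 x0^{c-1}) = ∑_{i=1}^{a} C(a-i+c-1, c-1) x1 x0^{i-1} x1 x0^{a+c-i-1}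
+ ∑_{i=1}^{c} C(c-i+a-1, a-1) x1 x0^{i-1} x1 x0^{a+c-i-1}`. -/
theorem stmt_18 (a c : ℕ) (ha : 1 ≤ a) (hc : 1 ≤ c) :
    sh (true :: List.replicate (a - 1) false) (true :: List.replicate (c - 1) false) =
      (∑ i ∈ Finset.Icc 1 a, Nat.choose (a - i + c - 1) (c - 1) •
        ({true :: (List.replicate (i - 1) false ++
            true :: List.replicate (a + c - i - 1) false)} : Multiset (List Bool))) +
      (∑ i ∈ Finset.Icc 1 c, Nat.choose (c - i + a - 1) (a - 1) •
        ({true :: (List.replicate (i - 1) false ++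
            true :: List.replicate (a + c - i - 1) false)} : Multiset (List Bool))) := by
  rw [sh, sh_comm (true :: _), map_cons_true_sh_replicate_false a c ha hc,
    map_cons_true_sh_replicate_false c a hc ha, add_comm c a]
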